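/- Let (Ω, μ) be a measure space, V a finite-dimensional real inner product space, r ≥ 2 and δ ≥ 0 real numbers, σ_m > 0, and let σ : Ω × V → V be a map such that for μ-a.e. x ∈ Ω and all τ, η ∈ V, ⟨σ(x,τ) − σ(x,η), τ − η⟩ ≥ σ_m (δ^r + ‖τ‖^r + ‖η‖^r)^{(r−2)/r} ‖τ − η‖². Let G, H : Ω → V be strongly measurable with finite L^r(μ) norms and such that x ↦ ⟨σ(x,G(x)) − σ(x,H(x)), G(x) − H(x)⟩ is measurable. Then ∫_Ω ⟨σ(x,G(x)) − σ(x,H(x)), G(x) − H(x)⟩ dμ(x) ≥ σ_m · 2^{(1−r)(r−2)/r} · ‖G − H‖_{L^r(μ)}^r (the left-hand integral being of a nonnegative integrand). -/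

import Mathlib

/-!
Put `t = ‖G x - H x‖` and `S = δ ^ r + ‖G x‖ ^ r + ‖H x‖ ^ r`. Convexity of `s ↦ s ^ r` gives
`2 ^ (1 - r) * t ^ r ≤ S`; raising this to the power `(r - 2) / r` and multiplying by `t ^ 2`
turns the monotonicity hypothesis into the a.e. bound
`σm * 2 ^ ((1 - r) * (r - 2) / r) * t ^ r ≤ ⟪σ x (G x) - σ x (H x), G x - H x⟫`,
which is then integrated. The comparison `ENNReal.ofReal (∫ f) ≤ ∫⁻ ENNReal.ofReal f` holds for
every real `f` (the Bochner integral of a non-integrable `f` is `0`), so the bound passes from the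
Bochner integral on the left to the lower Lebesgue integral on the right.
-/

open MeasureTheory
open scoped RealInnerProductSpace

lemma Real.add_rpow_le_two_rpow_mul {a b p : ℝ} (ha : 0 ≤ a) (hb : 0 ≤ b) (hp : 1 ≤ p) :
    (a + b) ^ p ≤ 2 ^ (p - 1) * (a ^ p + b ^ p) := by
  lift a to NNReal using ha
  lift b to NNReal using hb
  exact_mod_cast NNReal.rpow_add_le_mul_rpow_add_rpow a b hp

lemma norm_sub_rpow_le {E : Type*} [SeminormedAddCommGroup E] (a b : E) {p : ℝ} (hp : 1 ≤ p) :
    ‖a - b‖ ^ p ≤ 2 ^ (p - 1) * (‖a‖ ^ p + ‖b‖ ^ p) :=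
  (Real.rpow_le_rpow (norm_nonneg _) (norm_sub_le a b) (by linarith)).trans
    (Real.add_rpow_le_two_rpow_mul (norm_nonneg a) (norm_nonneg b) hp)

lemma two_rpow_mul_norm_sub_rpow_le {E : Type*} [SeminormedAddCommGroup E] (a b : E)
    {r δ : ℝ} (hr : 2 ≤ r) (hδ : 0 ≤ δ) :
    2 ^ ((1 - r) * (r - 2) / r) * ‖a - b‖ ^ r ≤
      (δ ^ r + ‖a‖ ^ r + ‖b‖ ^ r) ^ ((r - 2) / r) * ‖a - b‖ ^ 2 := by
  set t := ‖a - b‖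
  set q := (r - 2) / r
  have ht : 0 ≤ t := norm_nonneg _
  have h_convex : 2 ^ (1 - r) * t ^ r ≤ δ ^ r + ‖a‖ ^ r + ‖b‖ ^ r := by
    have h_cancel : (2 : ℝ) ^ (1 - r) * 2 ^ (r - 1) = 1 := by
      rw [← Real.rpow_add two_pos]; norm_num
    calc 2 ^ (1 - r) * t ^ r ≤ 2 ^ (1 - r) * (2 ^ (r - 1) * (‖a‖ ^ r + ‖b‖ ^ r)) := by
          gcongr; exact norm_sub_rpow_le a b (by linarith)
      _ = ‖a‖ ^ r + ‖b‖ ^ r := by rw [← mul_assoc, h_cancel, one_mul]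
      _ ≤ δ ^ r + ‖a‖ ^ r + ‖b‖ ^ r := by linarith [Real.rpow_nonneg hδ r]
  have h_split : t ^ r = (t ^ r) ^ q * t ^ 2 := by
    have hq : r * q = r - 2 := mul_div_cancel₀ _ (by linarith)
    rw [← Real.rpow_mul ht, hq, ← Real.rpow_two, ← Real.rpow_add' ht (by linarith)]
    ring_nf
  calc 2 ^ ((1 - r) * (r - 2) / r) * t ^ r
      = (2 ^ (1 - r) * t ^ r) ^ q * t ^ 2 := by
        rw [Real.mul_rpow (by positivity) (by positivity), ← Real.rpow_mul two_pos.le,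
          mul_div_assoc, mul_assoc, ← h_split]
    _ ≤ (δ ^ r + ‖a‖ ^ r + ‖b‖ ^ r) ^ q * t ^ 2 := by gcongr

lemma MeasureTheory.ofReal_integral_le_lintegral_ofReal {α : Type*} [MeasurableSpace α]
    (μ : Measure α) (f : α → ℝ) : ENNReal.ofReal (∫ x, f x ∂μ) ≤ ∫⁻ x, ENNReal.ofReal (f x) ∂μ := by
  by_cases hf : Integrable f μ
  · rw [integral_eq_lintegral_pos_part_sub_lintegral_neg_part hf]
    exact (ENNReal.ofReal_le_ofReal (sub_le_self _ ENNReal.toReal_nonneg)).trans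
      ENNReal.ofReal_toReal_le
  · simp [integral_undef hf]

theorem integrated_strong_monotonicity
    {Ω : Type*} [MeasurableSpace Ω] (μ : Measure Ω)
    {V : Type*} [NormedAddCommGroup V] [InnerProductSpace ℝ V]
    (r δ σm : ℝ) (hr : 2 ≤ r) (hδ : 0 ≤ δ) (hσm : 0 < σm)
    (σ : Ω → V → V)
    (hσ : ∀ᵐ x ∂μ, ∀ τ η : V,
      σm * (δ ^ r + ‖τ‖ ^ r + ‖η‖ ^ r) ^ ((r - 2) / r) * ‖τ - η‖ ^ 2 ≤
        ⟪σ x τ - σ x η, τ - η⟫)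
    (G H : Ω → V) :
    ENNReal.ofReal
        (σm * (2 : ℝ) ^ ((1 - r) * (r - 2) / r) *
          ((∫ x, ‖G x - H x‖ ^ r ∂μ) ^ (1 / r)) ^ r) ≤
      ∫⁻ x, ENNReal.ofReal ⟪σ x (G x) - σ x (H x), G x - H x⟫ ∂μ := by
  have h_pointwise : ∀ᵐ x ∂μ, σm * 2 ^ ((1 - r) * (r - 2) / r) * ‖G x - H x‖ ^ r ≤
      ⟪σ x (G x) - σ x (H x), G x - H x⟫ := by
    filter_upwards [hσ] with x hx
    calc σm * 2 ^ ((1 - r) * (r - 2) / r) * ‖G x - H x‖ ^ r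
        = σm * (2 ^ ((1 - r) * (r - 2) / r) * ‖G x - H x‖ ^ r) := mul_assoc _ _ _
      _ ≤ σm * ((δ ^ r + ‖G x‖ ^ r + ‖H x‖ ^ r) ^ ((r - 2) / r) * ‖G x - H x‖ ^ 2) :=
          mul_le_mul_of_nonneg_left (two_rpow_mul_norm_sub_rpow_le (G x) (H x) hr hδ) hσm.le
      _ ≤ ⟪σ x (G x) - σ x (H x), G x - H x⟫ := by rw [← mul_assoc]; exact hx _ _
  have h_rpow_cancel : ((∫ x, ‖G x - H x‖ ^ r ∂μ) ^ (1 / r)) ^ r = ∫ x, ‖G x - H x‖ ^ r ∂μ := by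
    rw [one_div, Real.rpow_inv_rpow (integral_nonneg fun x => by positivity) (by linarith)]
  calc ENNReal.ofReal (σm * 2 ^ ((1 - r) * (r - 2) / r) *
          ((∫ x, ‖G x - H x‖ ^ r ∂μ) ^ (1 / r)) ^ r)
      = ENNReal.ofReal (∫ x, σm * 2 ^ ((1 - r) * (r - 2) / r) * ‖G x - H x‖ ^ r ∂μ) := by
        rw [h_rpow_cancel, integral_const_mul]
    _ ≤ ∫⁻ x, ENNReal.ofReal (σm * 2 ^ ((1 - r) * (r - 2) / r) * ‖G x - H x‖ ^ r) ∂μ :=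
        ofReal_integral_le_lintegral_ofReal μ _
    _ ≤ ∫⁻ x, ENNReal.ofReal ⟪σ x (G x) - σ x (H x), G x - H x⟫ ∂μ :=
        lintegral_mono_ae (h_pointwise.mono fun x hx => ENNReal.ofReal_le_ofReal hx)
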